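/- arXiv:2310.07901 — 3 statements merged into one kernel-verified Lean document; each statement's English description precedes it below -/
import Mathlib

section
/- Suppose x₁,...,x₉ are self-adjoint unitaries on a Hilbert space such that each of the triples (x₁,x₂,x₃), (x₄,x₅,x₆), (x₇,x₈,x₉), (x₁,x₄,x₇), (x₂,x₅,x₈), (x₃,x₆,x₉) consists of pairwise commuting operators, the products of the row triples equal +1 and the products of the column triples equal −1. Then the Hilbert space has dimension 0 or at least 4, and no such operators exist in dimension 1 (i.e., no scalar solution exists). -/
/-!
Cancelling the involutions in the six product relations shows that `x₂` anticommutes with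
`x₄` and `x₁` with `x₅`, while `x₁, x₂` commute (first row), and so do `x₁, x₄` and `x₂, x₅`
(columns); in the code `xᵢ` is `x (i - 1)`.
A nonzero space then contains a common eigenvector `u` of the commuting involutions `x₁, x₂`;
applying `x₄` and `x₅` to it flips the two eigenvalues independently, giving four eigenvectors
with the four distinct joint eigenvalues `(±1, ±1)`, hence four linearly independent vectors.
-/

/-- Pairwise commutation of a triple. -/
def Comm3 {A : Type*} [Mul A] (a b c : A) : Prop :=
  a * b = b * a ∧ a * c = c * a ∧ b * c = c * b

theorem isUnit_of_mul_self_eq_one {M : Type*} [Monoid M] {a : M} (h : a * a = 1) : IsUnit a :=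
  isUnit_iff_exists.mpr ⟨a, h, h⟩

theorem mul_eq_mul_of_mul_mul_eq {M : Type*} [Monoid M] {a b c d : M} (hc : c * c = 1)
    (h : a * b * c = d) : a * b = d * c := by
  rw [← h, mul_assoc _ c, hc, mul_one]

section MagicSquare

variable {R : Type*} [Ring R] {x : Fin 9 → R}

-- Both sides equal `-x 8`, through the third column and the third row respectively.
theorem magic_square_rows_mul_eq_neg_columns_mul (hsq : ∀ i, x i * x i = 1)
    (hr1 : x 0 * x 1 * x 2 = 1) (hr2 : x 3 * x 4 * x 5 = 1) (hr3 : x 6 * x 7 * x 8 = 1)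
    (hc1 : x 0 * x 3 * x 6 = -1) (hc2 : x 1 * x 4 * x 7 = -1) (hc3 : x 2 * x 5 * x 8 = -1) :
    x 0 * x 1 * (x 3 * x 4) = -(x 0 * x 3 * (x 1 * x 4)) := by
  rw [mul_eq_mul_of_mul_mul_eq (hsq 2) hr1, mul_eq_mul_of_mul_mul_eq (hsq 5) hr2,
    mul_eq_mul_of_mul_mul_eq (hsq 6) hc1, mul_eq_mul_of_mul_mul_eq (hsq 7) hc2]
  simp only [one_mul, neg_one_mul, neg_mul_neg]
  rw [mul_eq_mul_of_mul_mul_eq (hsq 8) hc3, mul_eq_mul_of_mul_mul_eq (hsq 8) hr3, neg_one_mul,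
    one_mul]

theorem magic_square_anticommute_one_three (hsq : ∀ i, x i * x i = 1)
    (hr1 : x 0 * x 1 * x 2 = 1) (hr2 : x 3 * x 4 * x 5 = 1) (hr3 : x 6 * x 7 * x 8 = 1)
    (hc1 : x 0 * x 3 * x 6 = -1) (hc2 : x 1 * x 4 * x 7 = -1) (hc3 : x 2 * x 5 * x 8 = -1) :
    x 1 * x 3 = -(x 3 * x 1) := by
  have key := magic_square_rows_mul_eq_neg_columns_mul hsq hr1 hr2 hr3 hc1 hc2 hc3
  refine (isUnit_of_mul_self_eq_one (hsq 4)).mul_right_cancel <|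
    (isUnit_of_mul_self_eq_one (hsq 0)).mul_left_cancel ?_
  simpa only [mul_assoc, neg_mul, mul_neg] using key

theorem magic_square_anticommute_zero_four (hsq : ∀ i, x i * x i = 1)
    (hr1 : x 0 * x 1 * x 2 = 1) (hr2 : x 3 * x 4 * x 5 = 1) (hr3 : x 6 * x 7 * x 8 = 1)
    (hc1 : x 0 * x 3 * x 6 = -1) (hc2 : x 1 * x 4 * x 7 = -1) (hc3 : x 2 * x 5 * x 8 = -1)
    (h03 : Commute (x 0) (x 3)) (h14 : Commute (x 1) (x 4)) (h25 : Commute (x 2) (x 5)) :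
    x 0 * x 4 = -(x 4 * x 0) := by
  have key := magic_square_rows_mul_eq_neg_columns_mul hsq hr1 hr2 hr3 hc1 hc2 hc3
  have h25' : Commute (x 0 * x 1) (x 3 * x 4) := by
    rwa [mul_eq_mul_of_mul_mul_eq (hsq 2) hr1, mul_eq_mul_of_mul_mul_eq (hsq 5) hr2, one_mul,
      one_mul]
  have h : x 3 * (x 4 * x 0) * x 1 = x 3 * -(x 0 * x 4) * x 1 :=
    calc x 3 * (x 4 * x 0) * x 1 = x 3 * x 4 * (x 0 * x 1) := by simp only [mul_assoc]
      _ = x 0 * x 1 * (x 3 * x 4) := h25'.eq.symm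
      _ = -(x 3 * x 0 * (x 4 * x 1)) := by rw [key, h03.eq, h14.eq]
      _ = x 3 * -(x 0 * x 4) * x 1 := by simp only [mul_assoc, mul_neg, neg_mul]
  rw [(isUnit_of_mul_self_eq_one (hsq 3)).mul_left_cancel
    ((isUnit_of_mul_self_eq_one (hsq 1)).mul_right_cancel h), neg_neg]

end MagicSquare

section Involutions

variable {K V : Type*} [Field K] [AddCommGroup V] [Module K V]

theorem exists_ne_zero_smul_apply_eq_self [NeZero (2 : K)] [Nontrivial V]
    {a b : Module.End K V} (ha : a * a = 1) (hb : b * b = 1) (hab : Commute a b) :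
    ∃ s t : K, s * s = 1 ∧ t * t = 1 ∧
      ∃ u : V, u ≠ 0 ∧ (s • a) u = u ∧ (t • b) u = u := by
  have exists_sign : ∀ (e : Module.End K V) (v : V), v ≠ 0 →
      ∃ s : K, s * s = 1 ∧ (1 + s • e) v ≠ 0 := by
    intro e v hv
    by_contra! h
    have h2v : (2 : K) • v = (1 + (1 : K) • e) v + (1 + (-1 : K) • e) v := by
      simp only [LinearMap.add_apply, LinearMap.smul_apply, Module.End.one_apply]
      module
    rw [h 1 (one_mul 1), h (-1) (by norm_num), add_zero, smul_eq_zero] at h2v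
    exact h2v.elim two_ne_zero hv
  have fixed : ∀ (s : K) (e : Module.End K V), s * s = 1 → e * e = 1 →
      ∀ w, (s • e) ((1 + s • e) w) = (1 + s • e) w := by
    intro s e hs he w
    rw [← Module.End.mul_apply, mul_add, mul_one, smul_mul_smul_comm, hs, he, one_smul,
      add_comm]
  obtain ⟨v, hv⟩ := exists_ne (0 : V)
  obtain ⟨t, ht, hw⟩ := exists_sign b v hv
  obtain ⟨s, hs, hu⟩ := exists_sign a _ hw
  refine ⟨s, t, hs, ht, _, hu, fixed s a hs ha _, ?_⟩
  have hcomm : Commute (t • b) (1 + s • a) :=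
    (Commute.one_right _).add_right ((hab.symm.smul_left t).smul_right s)
  rw [← Module.End.mul_apply, hcomm.eq, Module.End.mul_apply, fixed t b ht hb]

theorem four_le_rank_of_apply_eq_self [CharZero K] {a b c d : Module.End K V}
    (hc : Function.Injective c) (hd : Function.Injective d) (hac : Commute a c)
    (hbc : b * c = -(c * b)) (had : a * d = -(d * a)) (hbd : Commute b d)
    {u : V} (hu : u ≠ 0) (hau : a u = u) (hbu : b u = u) :
    4 ≤ Module.rank K V := by
  -- `a + 2 • b` separates the four joint eigenvalue pairs `(±1, ±1)` of `a` and `b`.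
  have eigen {w : V} {α β : K} (hw : w ≠ 0) (ha : a w = α • w) (hb : b w = β • w) :
      (a + (2 : K) • b).HasEigenvector (α + 2 * β) w :=
    ⟨Module.End.mem_eigenspace_iff.mpr (by
      rw [LinearMap.add_apply, LinearMap.smul_apply, ha, hb]; module), hw⟩
  have hac' (w : V) : a (c w) = c (a w) := LinearMap.congr_fun hac.eq w
  have hbc' (w : V) : b (c w) = -c (b w) := LinearMap.congr_fun hbc w
  have had' (w : V) : a (d w) = -d (a w) := LinearMap.congr_fun had w
  have hbd' (w : V) : b (d w) = d (b w) := LinearMap.congr_fun hbd.eq w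
  have hcu : c u ≠ 0 := (map_ne_zero_iff c hc).mpr hu
  let μ : Fin 4 → K := ![1 + 2 * 1, 1 + 2 * -1, -1 + 2 * 1, -1 + 2 * -1]
  have hμ : Function.Injective μ := by
    intro i j h
    fin_cases i <;> fin_cases j <;> first | rfl | norm_num [μ] at h
  have heig (i : Fin 4) :
      (a + (2 : K) • b).HasEigenvector (μ i) (![u, c u, d u, d (c u)] i) := by
    fin_cases i
    · exact eigen hu (by simpa) (by simpa)
    · exact eigen hcu (by simp [hac', hau]) (by simp [hbc', hbu])
    · exact eigen ((map_ne_zero_iff d hd).mpr hu) (by simp [had', hau]) (by simp [hbd', hbu])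
    · exact eigen ((map_ne_zero_iff d hd).mpr hcu) (by simp [had', hac', hau])
        (by simp [hbd', hbc', hbu])
  simpa using
    ((a + (2 : K) • b).eigenvectors_linearIndependent' μ hμ _ heig).cardinal_lift_le_rank

theorem four_le_rank_of_anticommute [CharZero K] [Nontrivial V] {a b c d : Module.End K V}
    (ha : a * a = 1) (hb : b * b = 1) (hc : c * c = 1) (hd : d * d = 1) (hab : Commute a b)
    (hac : Commute a c) (hbc : b * c = -(c * b)) (had : a * d = -(d * a)) (hbd : Commute b d) :
    4 ≤ Module.rank K V := by
  obtain ⟨s, t, -, -, u, hu, hau, hbu⟩ := exists_ne_zero_smul_apply_eq_self ha hb hab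
  have injective {e : Module.End K V} (he : e * e = 1) : Function.Injective e :=
    ((Module.End.isUnit_iff e).mp (isUnit_of_mul_self_eq_one he)).injective
  refine four_le_rank_of_apply_eq_self (injective hc) (injective hd) (hac.smul_left s) ?_ ?_
    (hbd.smul_left t) hu hau hbu
  · rw [smul_mul_assoc, mul_smul_comm, hbc, smul_neg]
  · rw [smul_mul_assoc, mul_smul_comm, had, smul_neg]

end Involutions

theorem magic_square_dimension_general
    {H : Type*} [NormedAddCommGroup H] [InnerProductSpace ℂ H]
    (x : Fin 9 → (H →L[ℂ] H))
    (hsq : ∀ i, x i * x i = 1)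
    (r1 : Comm3 (x 0) (x 1) (x 2))
    (c1 : Comm3 (x 0) (x 3) (x 6)) (c2 : Comm3 (x 1) (x 4) (x 7))
    (c3 : Comm3 (x 2) (x 5) (x 8))
    (hr1 : x 0 * x 1 * x 2 = 1) (hr2 : x 3 * x 4 * x 5 = 1)
    (hr3 : x 6 * x 7 * x 8 = 1)
    (hc1 : x 0 * x 3 * x 6 = -1) (hc2 : x 1 * x 4 * x 7 = -1)
    (hc3 : x 2 * x 5 * x 8 = -1) :
    (Module.rank ℂ H = 0 ∨ 4 ≤ Module.rank ℂ H) ∧ Module.rank ℂ H ≠ 1 := by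
  have h13 := magic_square_anticommute_one_three hsq hr1 hr2 hr3 hc1 hc2 hc3
  have h04 := magic_square_anticommute_zero_four hsq hr1 hr2 hr3 hc1 hc2 hc3 c1.1 c2.1 c3.1
  let φ := ContinuousLinearMap.toLinearMapRingHom (R₁ := ℂ) (M₁ := H)
  have hφsq (i : Fin 9) : φ (x i) * φ (x i) = 1 := by rw [← map_mul, hsq, map_one]
  have hφanti {i j : Fin 9} (h : x i * x j = -(x j * x i)) :
      φ (x i) * φ (x j) = -(φ (x j) * φ (x i)) := by
    rw [← map_mul, ← map_mul, h, map_neg]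
  have hrank : Module.rank ℂ H = 0 ∨ 4 ≤ Module.rank ℂ H := by
    rcases subsingleton_or_nontrivial H with hH | hH
    · exact Or.inl (rank_zero_iff.mpr hH)
    · exact Or.inr <| four_le_rank_of_anticommute (hφsq 0) (hφsq 1) (hφsq 3) (hφsq 4)
        (Commute.map r1.1 φ) (Commute.map c1.1 φ) (hφanti h13) (hφanti h04)
        (Commute.map c2.1 φ)
  refine ⟨hrank, fun h1 => ?_⟩
  rcases hrank with h | h <;> rw [h1] at h
  · exact one_ne_zero h
  · exact absurd h (by norm_num)

/-- If `x₁,…,x₉` are self-adjoint unitaries on a complex Hilbert space satisfying the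
Mermin–Peres magic square relations (pairwise commutation within each row and column,
row products `+1`, column products `−1`), then the Hilbert space has dimension `0` or
at least `4`; in particular no such operators exist in dimension `1` (no scalar
solution). -/
theorem magic_square_dimension
    {H : Type*} [NormedAddCommGroup H] [InnerProductSpace ℂ H] [CompleteSpace H]
    (x : Fin 9 → (H →L[ℂ] H))
    (hsa : ∀ i, IsSelfAdjoint (x i))
    (hsq : ∀ i, x i * x i = 1)
    (r1 : Comm3 (x 0) (x 1) (x 2)) (r2 : Comm3 (x 3) (x 4) (x 5))
    (r3 : Comm3 (x 6) (x 7) (x 8))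
    (c1 : Comm3 (x 0) (x 3) (x 6)) (c2 : Comm3 (x 1) (x 4) (x 7))
    (c3 : Comm3 (x 2) (x 5) (x 8))
    (hr1 : x 0 * x 1 * x 2 = 1) (hr2 : x 3 * x 4 * x 5 = 1)
    (hr3 : x 6 * x 7 * x 8 = 1)
    (hc1 : x 0 * x 3 * x 6 = -1) (hc2 : x 1 * x 4 * x 7 = -1)
    (hc3 : x 2 * x 5 * x 8 = -1) :
    (Module.rank ℂ H = 0 ∨ 4 ≤ Module.rank ℂ H) ∧ Module.rank ℂ H ≠ 1 :=
  magic_square_dimension_general x hsq r1 c1 c2 c3 hr1 hr2 hr3 hc1 hc2 hc3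
end

section
/- In the Mermin–Peres magic square algebra (the *-algebra generated by x₁,...,x₉ with x_i* = x_i, x_i² = 1, commutation within each row and column, row products 1 and column products −1), the relations x₁x₅ = −x₅x₁ and x₂x₄ = −x₄x₂ hold, and x₁, x₅ each commute with x₂ and x₄. -/
/-!
Since every generator is an involution, each row and column relation solves for its last
entry. With `a, b, c, d = x₁, x₂, x₄, x₅` this gives `x₃ = ab`, `x₆ = cd`, `x₇ = -ac`,
`x₈ = -bd` and `x₉ = x₇x₈ = (ac)(bd)`, while the third column gives `x₉ = -(ab)(cd)`.
Cancelling `a` and `d` in `a(bc)d = -a(cb)d` yields `bc = -cb`. Then the commutation of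
`x₇` and `x₈`, i.e. `b(da)c = (bd)(ac) = (ac)(bd)`, together with `bc = -cb` turns into
`b(da)c = -b(ad)c`, and cancelling `b` and `c` yields `ad = -da`.
-/

theorem IsUnit.eq_of_mul_mul_eq_mul_mul {M : Type*} [Monoid M] {a d x y : M}
    (ha : IsUnit a) (hd : IsUnit d) (h : a * x * d = a * y * d) : x = y :=
  ha.mul_left_cancel (hd.mul_right_cancel h)

section

variable {M : Type*} [Monoid M] [HasDistribNeg M] {a b c d : M}

theorem neg_eq_of_mul_eq_neg_one (hb : b * b = 1) (h : a * b = -1) : -a = b :=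
  left_inv_eq_right_inv (by rw [neg_mul, h, neg_neg]) hb

theorem mul_eq_neg_mul_of_mul_mul_eq_neg (ha : IsUnit a) (hd : IsUnit d)
    (h : a * b * (c * d) = -(a * c * (b * d))) : b * c = -(c * b) :=
  ha.eq_of_mul_mul_eq_mul_mul hd <| by
    simpa only [mul_assoc, mul_neg, neg_mul] using h

theorem mul_eq_neg_mul_of_commute_mul_mul (hb : IsUnit b) (hc : IsUnit c)
    (hab : Commute a b) (hcd : Commute c d) (hbc : b * c = -(c * b))
    (h : Commute (a * c) (b * d)) : a * d = -(d * a) := by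
  suffices hda : d * a = -(a * d) by rw [hda, neg_neg]
  refine hb.eq_of_mul_mul_eq_mul_mul hc ?_
  calc b * (d * a) * c = a * (c * b) * d := by
        simpa only [mul_assoc] using h.eq.symm
    _ = -(a * b * (c * d)) := by
        rw [← neg_eq_iff_eq_neg.mpr hbc]; simp only [mul_assoc, mul_neg, neg_mul]
    _ = -(b * a * (d * c)) := by rw [hab.eq, hcd.eq]
    _ = b * -(a * d) * c := by simp only [mul_assoc, mul_neg, neg_mul]

end

theorem magic_square_algebra_anticommutation_general
    {A : Type*} [Ring A]
    (x : Fin 9 → A)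
    (hsq : ∀ i, x i * x i = 1)
    (r1 : x 0 * x 1 = x 1 * x 0 ∧ x 0 * x 2 = x 2 * x 0 ∧ x 1 * x 2 = x 2 * x 1)
    (r2 : x 3 * x 4 = x 4 * x 3 ∧ x 3 * x 5 = x 5 * x 3 ∧ x 4 * x 5 = x 5 * x 4)
    (r3 : x 6 * x 7 = x 7 * x 6 ∧ x 6 * x 8 = x 8 * x 6 ∧ x 7 * x 8 = x 8 * x 7)
    (c1 : x 0 * x 3 = x 3 * x 0 ∧ x 0 * x 6 = x 6 * x 0 ∧ x 3 * x 6 = x 6 * x 3)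
    (c2 : x 1 * x 4 = x 4 * x 1 ∧ x 1 * x 7 = x 7 * x 1 ∧ x 4 * x 7 = x 7 * x 4)
    (hr1 : x 0 * x 1 * x 2 = 1) (hr2 : x 3 * x 4 * x 5 = 1)
    (hr3 : x 6 * x 7 * x 8 = 1)
    (hc1 : x 0 * x 3 * x 6 = -1) (hc2 : x 1 * x 4 * x 7 = -1)
    (hc3 : x 2 * x 5 * x 8 = -1) :
    x 0 * x 4 = -(x 4 * x 0) ∧ x 1 * x 3 = -(x 3 * x 1) ∧
    x 0 * x 1 = x 1 * x 0 ∧ x 0 * x 3 = x 3 * x 0 ∧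
    x 4 * x 1 = x 1 * x 4 ∧ x 4 * x 3 = x 3 * x 4 := by
  have hunit i : IsUnit (x i) := ⟨⟨x i, x i, hsq i, hsq i⟩, rfl⟩
  have h2 : x 0 * x 1 = x 2 := left_inv_eq_right_inv hr1 (hsq 2)
  have h5 : x 3 * x 4 = x 5 := left_inv_eq_right_inv hr2 (hsq 5)
  have h6 : -(x 0 * x 3) = x 6 := neg_eq_of_mul_eq_neg_one (hsq 6) hc1
  have h7 : -(x 1 * x 4) = x 7 := neg_eq_of_mul_eq_neg_one (hsq 7) hc2
  have h8row : x 6 * x 7 = x 8 := left_inv_eq_right_inv hr3 (hsq 8)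
  have h8col : -(x 2 * x 5) = x 8 := neg_eq_of_mul_eq_neg_one (hsq 8) hc3
  have h13 : x 1 * x 3 = -(x 3 * x 1) :=
    mul_eq_neg_mul_of_mul_mul_eq_neg (hunit 0) (hunit 4) <| by
      rw [h2, h5, neg_eq_iff_eq_neg.mp h8col, ← h8row, ← h6, ← h7, neg_mul_neg]
  have h04 : x 0 * x 4 = -(x 4 * x 0) :=
    mul_eq_neg_mul_of_commute_mul_mul (hunit 1) (hunit 3) r1.1 r2.1 h13 <| by
      have h67 := r3.1
      rwa [← h6, ← h7, neg_mul_neg, neg_mul_neg] at h67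
  exact ⟨h04, h13, r1.1, c1.1, c2.1.symm, r2.1.symm⟩

/-- In the Mermin–Peres magic square algebra — equivalently, for any elements
`x₁,…,x₉` of a complex *-algebra satisfying its defining relations (self-adjoint
involutions, commutation within each row and column, row products `1`, column
products `−1`) — the relations `x₁x₅ = −x₅x₁` and `x₂x₄ = −x₄x₂` hold, and `x₁, x₅`
each commute with `x₂` and `x₄`. -/
theorem magic_square_algebra_anticommutation
    {A : Type*} [Ring A] [Algebra ℂ A] [StarRing A] [StarModule ℂ A]
    (x : Fin 9 → A)
    (hsa : ∀ i, star (x i) = x i)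
    (hsq : ∀ i, x i * x i = 1)
    (r1 : x 0 * x 1 = x 1 * x 0 ∧ x 0 * x 2 = x 2 * x 0 ∧ x 1 * x 2 = x 2 * x 1)
    (r2 : x 3 * x 4 = x 4 * x 3 ∧ x 3 * x 5 = x 5 * x 3 ∧ x 4 * x 5 = x 5 * x 4)
    (r3 : x 6 * x 7 = x 7 * x 6 ∧ x 6 * x 8 = x 8 * x 6 ∧ x 7 * x 8 = x 8 * x 7)
    (c1 : x 0 * x 3 = x 3 * x 0 ∧ x 0 * x 6 = x 6 * x 0 ∧ x 3 * x 6 = x 6 * x 3)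
    (c2 : x 1 * x 4 = x 4 * x 1 ∧ x 1 * x 7 = x 7 * x 1 ∧ x 4 * x 7 = x 7 * x 4)
    (c3 : x 2 * x 5 = x 5 * x 2 ∧ x 2 * x 8 = x 8 * x 2 ∧ x 5 * x 8 = x 8 * x 5)
    (hr1 : x 0 * x 1 * x 2 = 1) (hr2 : x 3 * x 4 * x 5 = 1)
    (hr3 : x 6 * x 7 * x 8 = 1)
    (hc1 : x 0 * x 3 * x 6 = -1) (hc2 : x 1 * x 4 * x 7 = -1)
    (hc3 : x 2 * x 5 * x 8 = -1) :
    x 0 * x 4 = -(x 4 * x 0) ∧ x 1 * x 3 = -(x 3 * x 1) ∧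
    x 0 * x 1 = x 1 * x 0 ∧ x 0 * x 3 = x 3 * x 0 ∧
    x 4 * x 1 = x 1 * x 4 ∧ x 4 * x 3 = x 3 * x 4 :=
  magic_square_algebra_anticommutation_general x hsq r1 r2 r3 c1 c2 hr1 hr2 hr3 hc1 hc2 hc3
end

section
/- If X₁, Z₁ are self-adjoint unitaries on H₁ and X₂, Z₂ on H₂ with X_i² = Z_i² = 1 and X_iZ_i = −Z_iX_i (i = 1,2), then there exists a unique *-homomorphism φ from the Mermin–Peres magic square algebra to B(H₁ ⊗ H₂) with φ(x₁) = Z₁⊗1, φ(x₂) = 1⊗Z₂, φ(x₄) = 1⊗X₂, φ(x₅) = X₁⊗1. -/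
/-- The defining relations of the Mermin–Peres magic square algebra, for a family of
nine operators: self-adjoint involutions, pairwise commutation within each of the six
row/column contexts, row products `1`, column products `−1`. -/
def IsMagicSquareRep {A : Type*} [Ring A] [StarRing A] (y : Fin 9 → A) : Prop :=
  (∀ i, star (y i) = y i) ∧ (∀ i, y i * y i = 1) ∧
  Comm3 (y 0) (y 1) (y 2) ∧ Comm3 (y 3) (y 4) (y 5) ∧ Comm3 (y 6) (y 7) (y 8) ∧
  Comm3 (y 0) (y 3) (y 6) ∧ Comm3 (y 1) (y 4) (y 7) ∧ Comm3 (y 2) (y 5) (y 8) ∧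
  y 0 * y 1 * y 2 = 1 ∧ y 3 * y 4 * y 5 = 1 ∧ y 6 * y 7 * y 8 = 1 ∧
  y 0 * y 3 * y 6 = -1 ∧ y 1 * y 4 * y 7 = -1 ∧ y 2 * y 5 * y 8 = -1

/-!
Once the four given operators are placed, the row and column product relations solve for the
remaining five entries one at a time: for involutions `a, b`, the relation `a * b * c = ±1`
forces `c = ±(b * a)`. This determines the whole square, which gives uniqueness. For existence
it remains to check that the square so determined satisfies all relations. The only
non-trivial ones are the commutations in the bottom row and the last column and the agreement of
the two formulas for the corner entry; there the two anticommutations `XᵢZᵢ = −ZᵢXᵢ` enter in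
pairs, so that their signs cancel.
-/

theorem eq_mul_mul_of_mul_mul_eq {M : Type*} [Monoid M] {a b c u : M} (ha : a * a = 1)
    (hb : b * b = 1) (h : a * b * c = u) : c = b * a * u := by
  rw [← h, mul_assoc, ← mul_assoc a, ← mul_assoc a, ha, one_mul, ← mul_assoc, hb, one_mul]

section Ring

variable {A : Type*} [Ring A]

def AntiCommute (a b : A) : Prop :=
  a * b = -(b * a)

theorem AntiCommute.symm {a b : A} (h : AntiCommute a b) : AntiCommute b a := by
  rw [AntiCommute, h, neg_neg]

theorem commute_mul_mul_of_antiCommute {p q r s : A} (hpr : Commute p r) (hps : AntiCommute p s)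
    (hqr : AntiCommute q r) (hqs : Commute q s) : Commute (p * q) (r * s) := by
  unfold AntiCommute at hps hqr
  calc p * q * (r * s) = p * (q * r) * s := by simp only [mul_assoc]
    _ = -(p * r * (q * s)) := by rw [hqr]; noncomm_ring
    _ = -(r * (p * s) * q) := by rw [hpr.eq, hqs.eq]; noncomm_ring
    _ = r * s * (p * q) := by rw [hps]; noncomm_ring

def magicSquareOf (a b c d : A) : Fin 9 → A :=
  ![a, b, b * a, c, d, d * c, -(c * a), -(d * b), -(d * c * (b * a))]

theorem comm3_mul {a b : A} (hab : Commute a b) : Comm3 a b (b * a) :=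
  ⟨hab, hab.mul_right (Commute.refl a), (Commute.refl b).mul_right hab.symm⟩

theorem comm3_neg_mul {a b : A} (hab : Commute a b) : Comm3 a b (-(b * a)) :=
  ⟨hab, (hab.mul_right (Commute.refl a)).neg_right, ((Commute.refl b).mul_right hab.symm).neg_right⟩

theorem mul_mul_mul_rev_eq_one {a b : A} (ha : a * a = 1) (hb : b * b = 1) :
    a * b * (b * a) = 1 := by
  rw [mul_assoc, ← mul_assoc b, hb, one_mul, ha]

theorem mul_mul_neg_mul_rev_eq_neg_one {a b : A} (ha : a * a = 1) (hb : b * b = 1) :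
    a * b * -(b * a) = -1 := by
  rw [mul_neg, mul_mul_mul_rev_eq_one ha hb]

variable [StarRing A]

def IsSelfAdjointInvolution (a : A) : Prop :=
  IsSelfAdjoint a ∧ a * a = 1

theorem IsSelfAdjointInvolution.neg {a : A} (ha : IsSelfAdjointInvolution a) :
    IsSelfAdjointInvolution (-a) :=
  ⟨ha.1.neg, by rw [neg_mul_neg, ha.2]⟩

theorem IsSelfAdjointInvolution.mul {a b : A} (ha : IsSelfAdjointInvolution a)
    (hb : IsSelfAdjointInvolution b) (hab : Commute a b) : IsSelfAdjointInvolution (a * b) :=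
  ⟨(ha.1.commute_iff hb.1).1 hab, by rw [hab.symm.mul_mul_mul_comm, ha.2, hb.2, one_mul]⟩

theorem IsMagicSquareRep.eq_magicSquareOf {y : Fin 9 → A} (h : IsMagicSquareRep y) :
    y = magicSquareOf (y 0) (y 1) (y 3) (y 4) := by
  obtain ⟨-, hsq, -, -, -, -, -, -, r0, r1, -, c0, c1, c2⟩ := h
  have h2 := eq_mul_mul_of_mul_mul_eq (hsq 0) (hsq 1) r0
  have h5 := eq_mul_mul_of_mul_mul_eq (hsq 3) (hsq 4) r1
  have h6 := eq_mul_mul_of_mul_mul_eq (hsq 0) (hsq 3) c0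
  have h7 := eq_mul_mul_of_mul_mul_eq (hsq 1) (hsq 4) c1
  have h8 := eq_mul_mul_of_mul_mul_eq (hsq 2) (hsq 5) c2
  rw [mul_one] at h2 h5
  rw [mul_neg_one] at h6 h7 h8
  rw [h2, h5] at h8
  funext i
  fin_cases i
  exacts [rfl, rfl, h2, rfl, rfl, h5, h6, h7, h8]

theorem isMagicSquareRep_magicSquareOf {Z₁ X₁ Z₂ X₂ : A}
    (hZ₁ : IsSelfAdjointInvolution Z₁) (hX₁ : IsSelfAdjointInvolution X₁)
    (hZ₂ : IsSelfAdjointInvolution Z₂) (hX₂ : IsSelfAdjointInvolution X₂)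
    (hXZ₁ : AntiCommute X₁ Z₁) (hXZ₂ : AntiCommute X₂ Z₂)
    (hZZ : Commute Z₁ Z₂) (hZX : Commute Z₁ X₂) (hXZ : Commute X₁ Z₂) (hXX : Commute X₁ X₂) :
    IsMagicSquareRep (magicSquareOf Z₁ Z₂ X₂ X₁) := by
  have hZZXX : Commute (Z₂ * Z₁) (X₁ * X₂) :=
    commute_mul_mul_of_antiCommute hXZ.symm hXZ₂.symm hXZ₁.symm hZX
  have hXZXZ : Commute (X₂ * Z₁) (X₁ * Z₂) :=
    commute_mul_mul_of_antiCommute hXX.symm hXZ₂ hXZ₁.symm hZZ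
  have h8 : -(X₁ * X₂ * (Z₂ * Z₁)) = -(X₁ * Z₂) * -(X₂ * Z₁) := by
    rw [neg_mul_neg, show X₁ * Z₂ * (X₂ * Z₁) = X₁ * (Z₂ * X₂) * Z₁ by noncomm_ring, hXZ₂.symm]
    noncomm_ring
  have hsa : ∀ i, IsSelfAdjointInvolution (magicSquareOf Z₁ Z₂ X₂ X₁ i) := by
    intro i
    fin_cases i
    exacts [hZ₁, hZ₂, hZ₂.mul hZ₁ hZZ.symm, hX₂, hX₁, hX₁.mul hX₂ hXX, (hX₂.mul hZ₁ hZX.symm).neg,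
      (hX₁.mul hZ₂ hXZ).neg, ((hX₁.mul hX₂ hXX).mul (hZ₂.mul hZ₁ hZZ.symm) hZZXX.symm).neg]
  have hsq i := (hsa i).2
  refine ⟨fun i ↦ (hsa i).1, hsq, comm3_mul hZZ, comm3_mul hXX.symm, ?_, comm3_neg_mul hZX,
    comm3_neg_mul hXZ.symm, comm3_neg_mul hZZXX, mul_mul_mul_rev_eq_one (hsq 0) (hsq 1),
    mul_mul_mul_rev_eq_one (hsq 3) (hsq 4), ?_, mul_mul_neg_mul_rev_eq_neg_one (hsq 0) (hsq 3),
    mul_mul_neg_mul_rev_eq_neg_one (hsq 1) (hsq 4), mul_mul_neg_mul_rev_eq_neg_one (hsq 2) (hsq 5)⟩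
  · change Comm3 (-(X₂ * Z₁)) (-(X₁ * Z₂)) (-(X₁ * X₂ * (Z₂ * Z₁)))
    rw [h8]
    exact comm3_mul hXZXZ.neg_left.neg_right
  · change -(X₂ * Z₁) * -(X₁ * Z₂) * -(X₁ * X₂ * (Z₂ * Z₁)) = 1
    rw [h8]
    exact mul_mul_mul_rev_eq_one (hsq 6) (hsq 7)

end Ring

/-- If `X₁, Z₁` and `X₂, Z₂` are self-adjoint unitaries with `Xᵢ² = Zᵢ² = 1` and
`XᵢZᵢ = −ZᵢXᵢ` acting on the two tensor factors of `H₁ ⊗ H₂` (so that each operator in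
the first pair commutes with each operator in the second pair), then there is a unique
*-homomorphism `φ` from the Mermin–Peres magic square algebra into the bounded
operators with `φ(x₁) = Z₁⊗1`, `φ(x₂) = 1⊗Z₂`, `φ(x₄) = 1⊗X₂`, `φ(x₅) = X₁⊗1`;
equivalently (since the magic square algebra is generated by `x₁, x₂, x₄, x₅`), there
is a unique family of nine bounded operators satisfying the magic square relations
whose entries `1, 2, 4, 5` are the four given operators. -/
theorem magic_square_rep_exists_unique
    {H : Type*} [NormedAddCommGroup H] [InnerProductSpace ℂ H] [CompleteSpace H]
    (Z₁ X₁ Z₂ X₂ : H →L[ℂ] H)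
    (hZ₁ : IsSelfAdjoint Z₁) (hX₁ : IsSelfAdjoint X₁)
    (hZ₂ : IsSelfAdjoint Z₂) (hX₂ : IsSelfAdjoint X₂)
    (hZ₁2 : Z₁ * Z₁ = 1) (hX₁2 : X₁ * X₁ = 1)
    (hZ₂2 : Z₂ * Z₂ = 1) (hX₂2 : X₂ * X₂ = 1)
    (hanti1 : X₁ * Z₁ = -(Z₁ * X₁)) (hanti2 : X₂ * Z₂ = -(Z₂ * X₂))
    (hc11 : Z₁ * Z₂ = Z₂ * Z₁) (hc12 : Z₁ * X₂ = X₂ * Z₁)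
    (hc21 : X₁ * Z₂ = Z₂ * X₁) (hc22 : X₁ * X₂ = X₂ * X₁) :
    ∃! y : Fin 9 → (H →L[ℂ] H),
      IsMagicSquareRep y ∧ y 0 = Z₁ ∧ y 1 = Z₂ ∧ y 3 = X₂ ∧ y 4 = X₁ := by
  refine ⟨magicSquareOf Z₁ Z₂ X₂ X₁, ⟨?_, rfl, rfl, rfl, rfl⟩, ?_⟩
  · exact isMagicSquareRep_magicSquareOf ⟨hZ₁, hZ₁2⟩ ⟨hX₁, hX₁2⟩ ⟨hZ₂, hZ₂2⟩ ⟨hX₂, hX₂2⟩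
      hanti1 hanti2 hc11 hc12 hc21 hc22
  · rintro y ⟨hy, rfl, rfl, rfl, rfl⟩
    exact hy.eq_magicSquareOf
end
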